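/- Let G be a bipartite false twin-free graph without isolated vertices with bipartition A ∪ B such that γ_t(G) = 6 and γ_gr^t(G) = 6. Then for any two distinct vertices a_1, a_2 ∈ A, |N(a_1) ∪ N(a_2)| = |B| − 1, and for any two distinct vertices b_1, b_2 ∈ B, |N(b_1) ∪ N(b_2)| = |A| − 1. -/

import Mathlib

/-- `S` is a total dominating set of `G`: every vertex has a neighbor in `S`. -/
def IsTotalDomSet {V : Type*} (G : SimpleGraph V) (S : Set V) : Prop :=
  ∀ v : V, ∃ u ∈ S, G.Adj v u

/-- `l` is a legal sequence of `G`: the vertices are distinct and every vertex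
(except possibly the first) totally dominates a vertex not totally dominated
by the previous vertices. -/
def IsLegalSeq {V : Type*} (G : SimpleGraph V) (l : List V) : Prop :=
  l.Nodup ∧ ∀ i : Fin l.length, 0 < (i : ℕ) →
    ∃ w : V, G.Adj (l.get i) w ∧ ∀ j : Fin l.length, (j : ℕ) < (i : ℕ) → ¬ G.Adj (l.get j) w

/-- `l` is a total dominating sequence of `G`. -/
def IsTotalDomSeq {V : Type*} (G : SimpleGraph V) (l : List V) : Prop :=
  IsLegalSeq G l ∧ IsTotalDomSet G {v | v ∈ l}

/-- The Grundy total domination number of `G`: the maximum length of a total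
dominating sequence. -/
noncomputable def grundyTotalDomNum {V : Type*} (G : SimpleGraph V) : ℕ :=
  sSup {k : ℕ | ∃ l : List V, IsTotalDomSeq G l ∧ l.length = k}

/-- The total domination number of `G`: the minimum cardinality of a total
dominating set. -/
noncomputable def totalDomNum {V : Type*} (G : SimpleGraph V) : ℕ :=
  sInf {k : ℕ | ∃ S : Set V, IsTotalDomSet G S ∧ S.ncard = k}

/-- `A`, `B` is a bipartition of `G`. -/
def IsBipartitionOf {V : Type*} (G : SimpleGraph V) (A B : Set V) : Prop :=
  (∀ v : V, (v ∈ A ∧ v ∉ B) ∨ (v ∈ B ∧ v ∉ A)) ∧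
  ∀ ⦃u v : V⦄, G.Adj u v → (u ∈ A ∧ v ∈ B) ∨ (u ∈ B ∧ v ∈ A)

/-- `G` has no false twins: distinct vertices have distinct open neighborhoods. -/
def FalseTwinFree {V : Type*} (G : SimpleGraph V) : Prop :=
  ∀ u v : V, u ≠ v → G.neighborSet u ≠ G.neighborSet v

/-- `G` has no isolated vertices. -/
def NoIsolatedVerts {V : Type*} (G : SimpleGraph V) : Prop :=
  ∀ v : V, ∃ u : V, G.Adj v u

/-!
Vertices of `A` have their neighbours in `B` and vice versa, so a legal sequence inside `A`
followed by one inside `B` is legal. If `S` dominates `B`, a legal sequence inside `B` can be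
extended greedily as long as `|S|` plus its length is below `γ_t`, since otherwise it would form a
total dominating set together with `S`. Hence every legal sequence `T` inside `A` satisfies
`|T| + γ_t ≤ γ_gr^t + |S|`, i.e. `|T| ≤ |S|` when `γ_t = γ_gr^t`. Since `G` is false twin-free,
two distinct vertices can always be put in a legal order.

So `B ⊄ N(a₁) ∪ N(a₂)`. Otherwise the neighbourhoods are not nested (if `N(a) = B`, then `{a}`
dominates `B` although `A` has a legal sequence of length 2), so pick `pᵢ ∈ N(aᵢ)` outside the other one; every `a ∈ A \ {a₁}` is
adjacent to `p₂`, for else `a₁, a` (in a legal order) followed by `a₂` is a legal sequence of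
length 3. Then `{a₁, a₂, p₁, p₂}` is a total dominating set of size at most 4.

Two distinct `b, b' ∈ B` outside `N(a₁) ∪ N(a₂)` are also impossible: with `x ∈ N(b) \ N(b')`
and `y ∈ N(b')`, the sequence `a₁, a₂, x, y` (first two in a legal order) is legal, and it can be
followed by a legal sequence of length 3 in `B` (obtained from `b, b'` by the previous step on
the other side), giving a legal sequence of length 7 > γ_gr^t.
-/

section

variable {V : Type*} {G : SimpleGraph V}

theorem isLegalSeq_iff {l : List V} : IsLegalSeq G l ↔ l.Nodup ∧
    ∀ i (hi : i < l.length), 0 < i →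
      ∃ w, G.Adj l[i] w ∧ ∀ j (hj : j < i), ¬ G.Adj (l[j]'(hj.trans hi)) w := by
  simp only [IsLegalSeq, Fin.forall_iff, List.get_eq_getElem]
  refine and_congr_right fun _ => forall₂_congr fun i hi => imp_congr_right fun _ => ?_
  exact exists_congr fun w => and_congr_right fun _ =>
    ⟨fun h j hj => h j (hj.trans hi) hj, fun h j _ hj => h j hj⟩

theorem isLegalSeq_concat_iff {l : List V} {v : V} :
    IsLegalSeq G (l ++ [v]) ↔ IsLegalSeq G l ∧ v ∉ l ∧
      (l ≠ [] → ∃ w, G.Adj v w ∧ ∀ u ∈ l, ¬ G.Adj u w) := by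
  simp only [isLegalSeq_iff, List.nodup_append, List.nodup_singleton, List.length_append,
    List.length_singleton, List.mem_singleton]
  constructor
  · rintro ⟨⟨hndl, -, hvl⟩, hleg⟩
    refine ⟨⟨hndl, fun i hi hpos => ?_⟩, fun h => hvl v h v rfl rfl, fun hl => ?_⟩
    · obtain ⟨w, hiw, hjw⟩ := hleg i (by omega) hpos
      refine ⟨w, by simpa [List.getElem_append_left hi] using hiw, fun j hj => ?_⟩
      simpa [List.getElem_append_left (hj.trans hi)] using hjw j hj
    · obtain ⟨w, hvw, hjw⟩ := hleg l.length (by omega) (List.length_pos_iff.mpr hl)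
      refine ⟨w, by simpa using hvw, fun u hu => ?_⟩
      obtain ⟨j, hj, rfl⟩ := List.mem_iff_getElem.mp hu
      simpa [List.getElem_append_left hj] using hjw j hj
  · rintro ⟨⟨hndl, hleg⟩, hvl, hw⟩
    refine ⟨⟨hndl, by simp, fun u hu b hb h => hvl (hb ▸ h ▸ hu)⟩, fun i hi hpos => ?_⟩
    rcases Nat.lt_or_ge i l.length with hil | hil
    · obtain ⟨w, hiw, hjw⟩ := hleg i hil hpos
      refine ⟨w, by simpa [List.getElem_append_left hil] using hiw, fun j hj => ?_⟩
      simpa [List.getElem_append_left (hj.trans hil)] using hjw j hj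
    · obtain rfl : i = l.length := by omega
      obtain ⟨w, hvw, hlw⟩ := hw (List.ne_nil_of_length_pos hpos)
      refine ⟨w, by simpa using hvw, fun j hj => ?_⟩
      simpa [List.getElem_append_left hj] using hlw _ (List.getElem_mem hj)

theorem isLegalSeq_nil : IsLegalSeq G ([] : List V) :=
  isLegalSeq_iff.mpr ⟨List.nodup_nil, fun _ hi => absurd hi (by simp)⟩

theorem isLegalSeq_singleton (v : V) : IsLegalSeq G [v] :=
  isLegalSeq_concat_iff.mpr ⟨isLegalSeq_nil, List.not_mem_nil, fun h => absurd rfl h⟩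

theorem IsLegalSeq.concat {l : List V} {v w : V} (h : IsLegalSeq G l) (hvw : G.Adj v w)
    (hlw : ∀ u ∈ l, ¬ G.Adj u w) : IsLegalSeq G (l ++ [v]) :=
  isLegalSeq_concat_iff.mpr ⟨h, fun hv => hlw v hv hvw, fun _ => ⟨w, hvw, hlw⟩⟩

theorem IsLegalSeq.exists_isTotalDomSeq [Finite V] (hiso : NoIsolatedVerts G) {l : List V}
    (h : IsLegalSeq G l) : ∃ l', IsTotalDomSeq G l' ∧ l.length ≤ l'.length := by
  by_cases htd : IsTotalDomSet G {v | v ∈ l}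
  · exact ⟨l, ⟨h, htd⟩, le_rfl⟩
  · obtain ⟨x, hx⟩ : ∃ x, ∀ u ∈ l, ¬ G.Adj x u := by simpa [IsTotalDomSet] using htd
    obtain ⟨u, hxu⟩ := hiso x
    have h' : IsLegalSeq G (l ++ [u]) := h.concat hxu.symm fun t ht htx => hx t ht htx.symm
    have : (l ++ [u]).length ≤ Nat.card V := by
      have := Fintype.ofFinite V
      simpa using h'.1.length_le_card
    obtain ⟨l', hl', hle⟩ := h'.exists_isTotalDomSeq hiso
    exact ⟨l', hl', by simp at hle; omega⟩
termination_by Nat.card V - l.length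
decreasing_by simp at this ⊢; omega

theorem IsLegalSeq.length_le_grundyTotalDomNum [Finite V] (hiso : NoIsolatedVerts G)
    {l : List V} (h : IsLegalSeq G l) : l.length ≤ grundyTotalDomNum G := by
  have := Fintype.ofFinite V
  obtain ⟨l', hl', hle⟩ := h.exists_isTotalDomSeq hiso
  refine hle.trans (le_csSup ⟨Fintype.card V, ?_⟩ ⟨l', hl', rfl⟩)
  rintro k ⟨m, hm, rfl⟩
  exact hm.1.1.length_le_card

theorem totalDomNum_le_ncard {S : Set V} (h : IsTotalDomSet G S) : totalDomNum G ≤ S.ncard :=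
  Nat.sInf_le ⟨S, h, rfl⟩

theorem exists_isLegalSeq_of_ne (hftf : FalseTwinFree G) {u v : V} (h : u ≠ v) :
    ∃ l, IsLegalSeq G l ∧ l.length = 2 ∧ ∀ x ∈ l, x = u ∨ x = v := by
  by_cases huv : ∃ w, G.Adj v w ∧ ¬ G.Adj u w
  · obtain ⟨w, hvw, huw⟩ := huv
    exact ⟨[u, v], (isLegalSeq_singleton u).concat hvw (by simpa using huw), rfl, by simp⟩
  · obtain ⟨w, huw, hvw⟩ : ∃ w, G.Adj u w ∧ ¬ G.Adj v w := by
      by_contra! hvu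
      push Not at huv
      exact hftf u v h (Set.ext fun w => ⟨hvu w, huv w⟩)
    refine ⟨[v, u], (isLegalSeq_singleton v).concat huw (by simpa using hvw), rfl, ?_⟩
    simp only [List.mem_cons, List.not_mem_nil, or_false]
    exact fun x hx => hx.symm

variable {A B : Set V}

namespace IsBipartitionOf

theorem symm (hbip : IsBipartitionOf G A B) : IsBipartitionOf G B A :=
  ⟨fun v => (hbip.1 v).symm, fun _ _ h => (hbip.2 h).symm⟩

theorem notMem_right {a : V} (hbip : IsBipartitionOf G A B) (ha : a ∈ A) : a ∉ B :=
  ((hbip.1 a).resolve_right fun h => h.2 ha).2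

theorem mem_right_of_adj {a v : V} (hbip : IsBipartitionOf G A B) (ha : a ∈ A)
    (h : G.Adj a v) : v ∈ B :=
  ((hbip.2 h).resolve_right fun h' => hbip.notMem_right ha h'.1).2

theorem not_adj {u v : V} (hbip : IsBipartitionOf G A B) (hu : u ∈ A) (hv : v ∈ A) :
    ¬ G.Adj u v :=
  fun h => hbip.notMem_right hv (hbip.mem_right_of_adj hu h)

end IsBipartitionOf

theorem IsLegalSeq.append_of_isBipartitionOf (hbip : IsBipartitionOf G A B)
    (hiso : NoIsolatedVerts G) {l₁ l₂ : List V} (h₁ : IsLegalSeq G l₁) (h₂ : IsLegalSeq G l₂)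
    (hl₁ : ∀ v ∈ l₁, v ∈ A) (hl₂ : ∀ v ∈ l₂, v ∈ B) : IsLegalSeq G (l₁ ++ l₂) := by
  induction l₂ using List.reverseRecOn with
  | nil => simpa using h₁
  | append_singleton l₂ v ih =>
    obtain ⟨h₂, hvl₂, hw⟩ := isLegalSeq_concat_iff.mp h₂
    have hvB : v ∈ B := hl₂ v (by simp)
    obtain ⟨w, hvw, hl₂w⟩ : ∃ w, G.Adj v w ∧ ∀ u ∈ l₂, ¬ G.Adj u w := by
      rcases eq_or_ne l₂ [] with rfl | hne
      · obtain ⟨w, hvw⟩ := hiso v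
        exact ⟨w, hvw, by simp⟩
      · exact hw hne
    have hwA : w ∈ A := hbip.symm.mem_right_of_adj hvB hvw
    rw [← List.append_assoc]
    refine (ih h₂ fun u hu => hl₂ u (by simp [hu])).concat hvw fun u hu => ?_
    rcases List.mem_append.mp hu with hu | hu
    · exact hbip.not_adj (hl₁ u hu) hwA
    · exact hl₂w u hu

theorem ncard_setOf_mem_le_length (l : List V) : {v | v ∈ l}.ncard ≤ l.length := by
  classical
  rw [← List.coe_toFinset, Set.ncard_coe_finset]
  exact l.toFinset_card_le

theorem IsBipartitionOf.exists_isLegalSeq_of_dominates (hbip : IsBipartitionOf G A B)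
    (hiso : NoIsolatedVerts G) {S : Set V} (hS : ∀ b ∈ B, ∃ a ∈ S, G.Adj b a) (n : ℕ)
    (hn : S.ncard + n ≤ totalDomNum G) :
    ∃ l, IsLegalSeq G l ∧ (∀ v ∈ l, v ∈ B) ∧ l.length = n := by
  induction n with
  | zero => exact ⟨[], isLegalSeq_nil, by simp, rfl⟩
  | succ n ih =>
    obtain ⟨l, hl, hlB, rfl⟩ := ih (by omega)
    obtain ⟨a, haA, hla⟩ : ∃ a ∈ A, ∀ u ∈ l, ¬ G.Adj u a := by
      by_contra! hc
      have htds : IsTotalDomSet G (S ∪ {v | v ∈ l}) := fun v => by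
        rcases hbip.1 v with ⟨hvA, -⟩ | ⟨hvB, -⟩
        · obtain ⟨u, hu, huv⟩ := hc v hvA
          exact ⟨u, .inr hu, huv.symm⟩
        · obtain ⟨a, ha, hva⟩ := hS v hvB
          exact ⟨a, .inl ha, hva⟩
      have := (totalDomNum_le_ncard htds).trans (Set.ncard_union_le _ _)
      have := ncard_setOf_mem_le_length l
      omega
    obtain ⟨z, haz⟩ := hiso a
    refine ⟨l ++ [z], hl.concat haz.symm hla, fun v hv => ?_, by simp⟩
    rcases List.mem_append.mp hv with hv | hv
    · exact hlB v hv
    · exact (List.mem_singleton.mp hv) ▸ hbip.mem_right_of_adj haA haz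

theorem IsBipartitionOf.length_add_totalDomNum_le [Finite V] (hbip : IsBipartitionOf G A B)
    (hiso : NoIsolatedVerts G) {l : List V} (hl : IsLegalSeq G l) (hlA : ∀ v ∈ l, v ∈ A)
    {S : Set V} (hS : ∀ b ∈ B, ∃ a ∈ S, G.Adj b a) :
    l.length + totalDomNum G ≤ grundyTotalDomNum G + S.ncard := by
  have hl_le := hl.length_le_grundyTotalDomNum hiso
  rcases le_or_gt (totalDomNum G) S.ncard with hS_le | hS_lt
  · omega
  obtain ⟨m, hm, hmB, hlen⟩ :=
    hbip.exists_isLegalSeq_of_dominates hiso hS (totalDomNum G - S.ncard) (by omega)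
  have := (hl.append_of_isBipartitionOf hbip hiso hm hlA hmB).length_le_grundyTotalDomNum hiso
  rw [List.length_append] at this
  omega

namespace IsBipartitionOf

variable [Finite V]

theorem not_subset_neighborSet (hbip : IsBipartitionOf G A B) (hftf : FalseTwinFree G)
    (hiso : NoIsolatedVerts G) (hγ : grundyTotalDomNum G ≤ totalDomNum G) {a a' : V}
    (ha : a ∈ A) (ha' : a' ∈ A) (hne : a ≠ a') : ¬ B ⊆ G.neighborSet a := by
  intro hB
  obtain ⟨l, hl, hlen, hmem⟩ := exists_isLegalSeq_of_ne hftf hne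
  have := hbip.length_add_totalDomNum_le hiso hl
    (fun v hv => (hmem v hv).elim (· ▸ ha) (· ▸ ha')) (S := {a})
    fun b hb => ⟨a, rfl, (hB hb).symm⟩
  rw [hlen, Set.ncard_singleton] at this
  omega

theorem adj_of_subset_neighborSet_union (hbip : IsBipartitionOf G A B)
    (hftf : FalseTwinFree G) (hiso : NoIsolatedVerts G)
    (hγ : grundyTotalDomNum G ≤ totalDomNum G) {a₁ a₂ a p : V} (h1 : a₁ ∈ A) (h2 : a₂ ∈ A)
    (ha : a ∈ A) (ha₁ : a ≠ a₁)
    (hB : B ⊆ G.neighborSet a₁ ∪ G.neighborSet a₂) (hp₂ : G.Adj a₂ p) (hp₁ : ¬ G.Adj a₁ p) :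
    G.Adj a p := by
  by_contra hap
  obtain ⟨l, hl, hlen, hmem⟩ := exists_isLegalSeq_of_ne hftf ha₁.symm
  have hl' : IsLegalSeq G (l ++ [a₂]) :=
    hl.concat hp₂ fun u hu => (hmem u hu).elim (· ▸ hp₁) (· ▸ hap)
  have hl'A : ∀ v ∈ l ++ [a₂], v ∈ A := List.forall_mem_append.mpr
    ⟨fun v hv => (hmem v hv).elim (· ▸ h1) (· ▸ ha), List.forall_mem_singleton.mpr h2⟩
  have := hbip.length_add_totalDomNum_le hiso hl' hl'A (S := {v | v ∈ [a₁, a₂]})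
    fun b hb => (hB hb).elim (⟨a₁, by simp, G.adj_symm ·⟩) (⟨a₂, by simp, G.adj_symm ·⟩)
  have := ncard_setOf_mem_le_length [a₁, a₂]
  simp only [List.length_append, hlen, List.length_cons, List.length_nil] at *
  omega

theorem not_subset_neighborSet_union (hbip : IsBipartitionOf G A B) (hftf : FalseTwinFree G)
    (hiso : NoIsolatedVerts G) (hγ : grundyTotalDomNum G ≤ totalDomNum G)
    (h5 : 5 ≤ totalDomNum G) {a₁ a₂ : V} (h1 : a₁ ∈ A) (h2 : a₂ ∈ A) (hne : a₁ ≠ a₂) :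
    ¬ B ⊆ G.neighborSet a₁ ∪ G.neighborSet a₂ := by
  intro hB
  by_cases hP₁ : G.neighborSet a₁ ⊆ G.neighborSet a₂
  · exact hbip.not_subset_neighborSet hftf hiso hγ h2 h1 hne.symm
      fun b hb => (hB hb).elim (hP₁ ·) id
  by_cases hP₂ : G.neighborSet a₂ ⊆ G.neighborSet a₁
  · exact hbip.not_subset_neighborSet hftf hiso hγ h1 h2 hne
      fun b hb => (hB hb).elim id (hP₂ ·)
  obtain ⟨p₁, hp₁, hp₁'⟩ := Set.not_subset.mp hP₁
  obtain ⟨p₂, hp₂, hp₂'⟩ := Set.not_subset.mp hP₂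
  have htds : IsTotalDomSet G {v | v ∈ [a₁, a₂, p₁, p₂]} := fun v => by
    rcases hbip.1 v with ⟨hvA, -⟩ | ⟨hvB, -⟩
    · by_cases hv₁ : v = a₁
      · exact ⟨p₁, by simp, hv₁ ▸ hp₁⟩
      exact ⟨p₂, by simp,
        hbip.adj_of_subset_neighborSet_union hftf hiso hγ h1 h2 hvA hv₁ hB hp₂ hp₂'⟩
    · exact (hB hvB).elim (⟨a₁, by simp, G.adj_symm ·⟩) (⟨a₂, by simp, G.adj_symm ·⟩)
  have := (totalDomNum_le_ncard htds).trans (ncard_setOf_mem_le_length _)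
  simp only [List.length_cons, List.length_nil] at this
  omega

theorem exists_isLegalSeq_length_eq_three (hbip : IsBipartitionOf G A B)
    (hftf : FalseTwinFree G) (hiso : NoIsolatedVerts G)
    (hγ : grundyTotalDomNum G ≤ totalDomNum G) (h5 : 5 ≤ totalDomNum G) {a₁ a₂ : V}
    (h1 : a₁ ∈ A) (h2 : a₂ ∈ A) (hne : a₁ ≠ a₂) :
    ∃ l, IsLegalSeq G l ∧ (∀ v ∈ l, v ∈ A) ∧ l.length = 3 := by
  obtain ⟨b, hbB, hbU⟩ :=
    Set.not_subset.mp (hbip.not_subset_neighborSet_union hftf hiso hγ h5 h1 h2 hne)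
  obtain ⟨l, hl, hlen, hmem⟩ := exists_isLegalSeq_of_ne hftf hne
  obtain ⟨z, hbz⟩ := hiso b
  refine ⟨l ++ [z], hl.concat hbz.symm fun u hu hub => ?_, ?_, by simp [hlen]⟩
  · exact hbU ((hmem u hu).elim (fun h => .inl (h ▸ hub)) (fun h => .inr (h ▸ hub)))
  · exact List.forall_mem_append.mpr ⟨fun v hv => (hmem v hv).elim (· ▸ h1) (· ▸ h2),
      List.forall_mem_singleton.mpr (hbip.symm.mem_right_of_adj hbB hbz)⟩

theorem eq_of_notMem_neighborSet_union (hbip : IsBipartitionOf G A B)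
    (hftf : FalseTwinFree G) (hiso : NoIsolatedVerts G)
    (hγ : grundyTotalDomNum G ≤ totalDomNum G) (h5 : 5 ≤ totalDomNum G)
    (h6 : grundyTotalDomNum G ≤ 6) {a₁ a₂ b b' : V} (h1 : a₁ ∈ A) (h2 : a₂ ∈ A)
    (hne : a₁ ≠ a₂) (hb : b ∈ B) (hb' : b' ∈ B)
    (hbU : b ∉ G.neighborSet a₁ ∪ G.neighborSet a₂)
    (hb'U : b' ∉ G.neighborSet a₁ ∪ G.neighborSet a₂) : b = b' := by
  by_contra hbb'
  wlog hx : ∃ x, G.Adj b x ∧ ¬ G.Adj b' x generalizing b b'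
  · refine this hb' hb hb'U hbU (Ne.symm hbb') ?_
    by_contra! hx'
    push Not at hx
    exact hftf b b' hbb' (Set.ext fun x => ⟨hx x, hx' x⟩)
  obtain ⟨x, hbx, hb'x⟩ := hx
  obtain ⟨y, hb'y⟩ := hiso b'
  obtain ⟨l, hl, hlen, hmem⟩ := exists_isLegalSeq_of_ne hftf hne
  have hnotAdj {c : V} (hcU : c ∉ G.neighborSet a₁ ∪ G.neighborSet a₂) :
      ∀ u ∈ l, ¬ G.Adj u c := fun u hu huc =>
    hcU ((hmem u hu).elim (fun h => .inl (h ▸ huc)) (fun h => .inr (h ▸ huc)))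
  have hT : IsLegalSeq G (l ++ [x] ++ [y]) := by
    refine (hl.concat hbx.symm (hnotAdj hbU)).concat hb'y.symm fun u hu => ?_
    rcases List.mem_append.mp hu with hu | hu
    · exact hnotAdj hb'U u hu
    · exact (List.mem_singleton.mp hu) ▸ fun h => hb'x h.symm
  have hTA : ∀ v ∈ l ++ [x] ++ [y], v ∈ A := by
    simp only [List.forall_mem_append, List.forall_mem_singleton]
    exact ⟨⟨fun v hv => (hmem v hv).elim (· ▸ h1) (· ▸ h2),
      hbip.symm.mem_right_of_adj hb hbx⟩, hbip.symm.mem_right_of_adj hb' hb'y⟩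
  obtain ⟨m, hm, hmB, hmlen⟩ :=
    hbip.symm.exists_isLegalSeq_length_eq_three hftf hiso hγ h5 hb hb' hbb'
  have := (hT.append_of_isBipartitionOf hbip hiso hm hTA hmB).length_le_grundyTotalDomNum hiso
  simp only [List.length_append, hlen, hmlen, List.length_singleton] at this
  omega

theorem ncard_neighborSet_union (hbip : IsBipartitionOf G A B) (hftf : FalseTwinFree G)
    (hiso : NoIsolatedVerts G) (hγ : grundyTotalDomNum G ≤ totalDomNum G)
    (h5 : 5 ≤ totalDomNum G) (h6 : grundyTotalDomNum G ≤ 6) {a₁ a₂ : V} (h1 : a₁ ∈ A)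
    (h2 : a₂ ∈ A) (hne : a₁ ≠ a₂) :
    (G.neighborSet a₁ ∪ G.neighborSet a₂).ncard = B.ncard - 1 := by
  obtain ⟨b, hbB, hbU⟩ :=
    Set.not_subset.mp (hbip.not_subset_neighborSet_union hftf hiso hγ h5 h1 h2 hne)
  have hU : G.neighborSet a₁ ∪ G.neighborSet a₂ = B \ {b} := by
    ext v
    refine ⟨fun hv => ⟨?_, fun hvb => hbU (hvb ▸ hv)⟩, fun ⟨hvB, hvb⟩ => ?_⟩
    · exact hv.elim (hbip.mem_right_of_adj h1) (hbip.mem_right_of_adj h2)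
    · by_contra hvU
      exact hvb
        (hbip.eq_of_notMem_neighborSet_union hftf hiso hγ h5 h6 h1 h2 hne hvB hbB hvU hbU)
  rw [hU, Set.ncard_sdiff_singleton_of_mem hbB]

end IsBipartitionOf

end

/-- In a bipartite false twin-free graph without isolated vertices,
with bipartition `A ∪ B` and `γ_t(G) = γ_gr^t(G) = 6`, any two distinct vertices
of `A` together totally dominate all but exactly one vertex of `B`, and
symmetrically for `B`. -/
theorem neighbors_union_card_of_six {V : Type*} [Fintype V] (G : SimpleGraph V)
    (A B : Set V) (hbip : IsBipartitionOf G A B) (hftf : FalseTwinFree G)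
    (hiso : NoIsolatedVerts G)
    (ht : totalDomNum G = 6) (hg : grundyTotalDomNum G = 6) :
    (∀ a₁ a₂ : V, a₁ ∈ A → a₂ ∈ A → a₁ ≠ a₂ →
      (G.neighborSet a₁ ∪ G.neighborSet a₂).ncard = B.ncard - 1) ∧
    (∀ b₁ b₂ : V, b₁ ∈ B → b₂ ∈ B → b₁ ≠ b₂ →
      (G.neighborSet b₁ ∪ G.neighborSet b₂).ncard = A.ncard - 1) := by
  have hγ : grundyTotalDomNum G ≤ totalDomNum G := by omega
  have h5 : 5 ≤ totalDomNum G := by omega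
  have h6 : grundyTotalDomNum G ≤ 6 := by omega
  exact ⟨fun _ _ => hbip.ncard_neighborSet_union hftf hiso hγ h5 h6,
    fun _ _ => hbip.symm.ncard_neighborSet_union hftf hiso hγ h5 h6⟩
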